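/- (Aubin–Lions–Simon compactness, uniform-convergence case.) Let T > 0 and set I = (0,T). Let Y₀, Y₁, Y₂ be real Banach spaces, let j₀ : Y₀ → Y₁ be an injective continuous linear map which is compact, and let j₁ : Y₁ → Y₂ be an injective continuous linear map. Let 1 < q ≤ ∞. Let (u_n) be a sequence of strongly measurable functions u_n : [0,T] → Y₀ with sup_n ess sup_{t∈(0,T)} ‖u_n(t)‖_{Y₀} < ∞, and suppose there exist v_n ∈ L^q(I;Y₂) with sup_n ‖v_n‖_{L^q(I;Y₂)} < ∞ such that j₁(j₀(u_n(t))) − j₁(j₀(u_n(s))) = ∫ₛᵗ v_n(r) dr (Bochner integral in Y₂) for all 0 ≤ s ≤ t ≤ T and all n. Then there exist continuous functions ũ_n : [0,T] → Y₁ with ũ_n(t) = j₀(u_n(t)) for a.e. t ∈ (0,T), a subsequence (ũ_{n_k}), and a continuous function u : [0,T] → Y₁ such that sup_{t∈[0,T]} ‖ũ_{n_k}(t) − u(t)‖_{Y₁} → 0 as k → ∞. -/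

import Mathlib

open MeasureTheory
open scoped ENNReal NNReal

private lemma aux_delta {C e ε : ℝ} (hC : 0 ≤ C) (he : 0 < e) (hε : 0 < ε) :
    ∃ δ > 0, ∀ r : ℝ, 0 ≤ r → r < δ → C * r ^ e < ε := by
  refine ⟨(ε / (C + 1)) ^ e⁻¹, Real.rpow_pos_of_pos (div_pos hε (by linarith)) _, ?_⟩
  intro r hr hrδ
  have hδe : ((ε / (C + 1)) ^ e⁻¹) ^ e = ε / (C + 1) :=
    Real.rpow_inv_rpow (le_of_lt (div_pos hε (by linarith))) he.ne'
  have hre : r ^ e ≤ ε / (C + 1) := by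
    calc r ^ e ≤ ((ε / (C + 1)) ^ e⁻¹) ^ e := Real.rpow_le_rpow hr hrδ.le he.le
      _ = ε / (C + 1) := hδe
  have h1 : C * r ^ e ≤ C * (ε / (C + 1)) :=
    mul_le_mul_of_nonneg_left hre hC
  have h2 : C * (ε / (C + 1)) < ε := by
    have hd : C / (C + 1) < 1 := (div_lt_one (by linarith)).2 (by linarith)
    calc C * (ε / (C + 1)) = ε * (C / (C + 1)) := by ring
      _ < ε * 1 := by exact mul_lt_mul_of_pos_left hd hε
      _ = ε := mul_one ε
  linarith

private lemma aux_inv {Y₁ Y₂ : Type*} [NormedAddCommGroup Y₁] [NormedAddCommGroup Y₂]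
    (j : Y₁ → Y₂) (hc : Continuous j) (hinj : Function.Injective j)
    {K : Set Y₁} (hK : IsCompact K) :
    ∀ ε > 0, ∃ δ > 0, ∀ x ∈ K, ∀ y ∈ K, dist (j x) (j y) < δ → dist x y < ε := by
  intro ε hε
  set D : Set (Y₁ × Y₁) := (K ×ˢ K) ∩ {p : Y₁ × Y₁ | ε ≤ dist p.1 p.2} with hD
  have hDcpt : IsCompact D :=
    (hK.prod hK).inter_right (isClosed_le continuous_const
      (continuous_fst.dist continuous_snd))
  rcases D.eq_empty_or_nonempty with hDe | hDne
  · refine ⟨1, one_pos, fun x hx y hy _ => ?_⟩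
    by_contra h
    push_neg at h
    have : (x, y) ∈ D := ⟨⟨hx, hy⟩, h⟩
    simp [hDe] at this
  · obtain ⟨p₀, hp₀D, hp₀min⟩ := hDcpt.exists_isMinOn hDne
      (((hc.comp continuous_fst).dist (hc.comp continuous_snd)).continuousOn)
    have hne : p₀.1 ≠ p₀.2 := by
      intro h
      have := hp₀D.2
      simp only [Set.mem_setOf_eq, h, dist_self] at this
      linarith
    have hδpos : 0 < dist (j p₀.1) (j p₀.2) :=
      dist_pos.2 (fun h => hne (hinj h))
    refine ⟨dist (j p₀.1) (j p₀.2), hδpos, fun x hx y hy hxy => ?_⟩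
    by_contra h
    push_neg at h
    have hmem : (x, y) ∈ D := ⟨⟨hx, hy⟩, h⟩
    have h2 := isMinOn_iff.1 hp₀min (x, y) hmem
    simp only [Function.comp_apply] at h2
    linarith

private lemma aux_dense {T : ℝ} (hT : 0 < T) {A : Set ℝ}
    (hnull : volume (Set.Ioo 0 T \ A) = 0) : Set.Icc 0 T ⊆ closure A := by
  intro t ht
  rw [Metric.mem_closure_iff]
  intro ε hε
  set a := max 0 (t - ε) with ha
  set b := min T (t + ε) with hb
  have hab : a < b := by
    rw [ha, hb, max_lt_iff, lt_min_iff, lt_min_iff]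
    exact ⟨⟨hT, by linarith [ht.1]⟩, ⟨by linarith [ht.2], by linarith⟩⟩
  have hsub : Set.Ioo a b ⊆ Set.Ioo 0 T :=
    Set.Ioo_subset_Ioo (le_max_left _ _) (min_le_left _ _)
  have hpos : volume (Set.Ioo a b) ≠ 0 := by
    rw [Real.volume_Ioo]
    simp [ENNReal.ofReal_pos.2 (sub_pos.2 hab), ne_of_gt]
  have hne : (A ∩ Set.Ioo a b).Nonempty := by
    by_contra h
    rw [Set.not_nonempty_iff_eq_empty] at h
    have hsub2 : Set.Ioo a b ⊆ Set.Ioo 0 T \ A := by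
      intro s hs
      refine ⟨hsub hs, fun hsA => ?_⟩
      have : s ∈ A ∩ Set.Ioo a b := ⟨hsA, hs⟩
      simp [h] at this
    exact hpos (measure_mono_null hsub2 hnull)
  obtain ⟨s, hsA, hs⟩ := hne
  refine ⟨s, hsA, ?_⟩
  rw [Real.dist_eq, abs_lt]
  constructor
  · have : s < b := hs.2
    have : b ≤ t + ε := min_le_right _ _
    linarith
  · have : a < s := hs.1
    have : t - ε ≤ a := le_max_right _ _
    linarith

private lemma aux_equi {X ι Y₁ Y₂ : Type*} [PseudoMetricSpace X]
    [NormedAddCommGroup Y₁] [NormedAddCommGroup Y₂]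
    (j : Y₁ → Y₂) (hc : Continuous j) (hinj : Function.Injective j)
    {K : Set Y₁} (hK : IsCompact K) {C e : ℝ} (hC : 0 ≤ C) (he : 0 < e)
    (g : ι → X → Y₁) (hgK : ∀ i t, g i t ∈ K)
    (hmod : ∀ i s t, ‖j (g i s) - j (g i t)‖ ≤ C * (dist s t) ^ e) :
    Equicontinuous g := by
  intro t₀
  rw [Metric.equicontinuousAt_iff]
  intro ε hε
  obtain ⟨δ₁, hδ₁, hδ⟩ := aux_inv j hc hinj hK ε hε
  obtain ⟨δ, hδpos, hδprop⟩ := aux_delta hC he hδ₁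
  refine ⟨δ, hδpos, fun t ht i => ?_⟩
  have h1 : dist (j (g i t₀)) (j (g i t)) < δ₁ := by
    rw [dist_eq_norm]
    exact lt_of_le_of_lt (hmod i t₀ t)
      (hδprop _ dist_nonneg (by rwa [dist_comm]))
  exact hδ _ (hgK i t₀) _ (hgK i t) h1

/-- Aubin–Lions–Simon compactness, uniform-convergence case. -/
theorem stmt_5 (T : ℝ) (hT : 0 < T)
    (Y₀ Y₁ Y₂ : Type*)
    [NormedAddCommGroup Y₀] [NormedSpace ℝ Y₀] [CompleteSpace Y₀]
    [NormedAddCommGroup Y₁] [NormedSpace ℝ Y₁] [CompleteSpace Y₁]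
    [NormedAddCommGroup Y₂] [NormedSpace ℝ Y₂] [CompleteSpace Y₂]
    (j₀ : Y₀ →L[ℝ] Y₁) (hj₀inj : Function.Injective j₀) (hj₀cpt : IsCompactOperator j₀)
    (j₁ : Y₁ →L[ℝ] Y₂) (hj₁inj : Function.Injective j₁)
    (q : ℝ≥0∞) (hq : 1 < q)
    (u : ℕ → ℝ → Y₀)
    (humeas : ∀ n, AEStronglyMeasurable (u n) (volume.restrict (Set.Ioo 0 T)))
    (C₀ : ℝ) (hubound : ∀ n, ∀ᵐ t ∂(volume.restrict (Set.Ioo 0 T)), ‖u n t‖ ≤ C₀)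
    (v : ℕ → ℝ → Y₂)
    (hv : ∀ n, MemLp (v n) q (volume.restrict (Set.Ioo 0 T)))
    (C₁ : ℝ≥0∞) (hC₁ : C₁ < ⊤)
    (hvbound : ∀ n, eLpNorm (v n) q (volume.restrict (Set.Ioo 0 T)) ≤ C₁)
    (hderiv : ∀ n, ∀ s t : ℝ, 0 ≤ s → s ≤ t → t ≤ T →
      j₁ (j₀ (u n t)) - j₁ (j₀ (u n s)) = ∫ r in s..t, v n r) :
    ∃ utilde : ℕ → ℝ → Y₁,
      (∀ n, ContinuousOn (utilde n) (Set.Icc 0 T)) ∧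
      (∀ n, ∀ᵐ t ∂(volume.restrict (Set.Ioo 0 T)), utilde n t = j₀ (u n t)) ∧
      ∃ φ : ℕ → ℕ, StrictMono φ ∧ ∃ w : ℝ → Y₁, ContinuousOn w (Set.Icc 0 T) ∧
        Filter.Tendsto (fun k => ⨆ t : Set.Icc (0 : ℝ) T, ‖utilde (φ k) t - w t‖)
          Filter.atTop (nhds 0) := by
  classical
  have hT0 : (0:ℝ) ≤ T := hT.le
  -- the compact set
  set K : Set Y₁ := closure (j₀ '' Metric.closedBall 0 C₀) with hKdef
  have hK : IsCompact K := hj₀cpt.isCompact_closure_image_closedBall C₀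
  -- the exponent and constant
  set e : ℝ := 1 - 1 / q.toReal with he
  have he0 : 0 < e := by
    rcases eq_or_ne q ⊤ with h | h
    · simp [he, h]
    · have h1 : 1 < q.toReal := by
        rw [← ENNReal.toReal_one]
        exact (ENNReal.toReal_lt_toReal (by simp) h).2 hq
      have : 1 / q.toReal < 1 := by
        rw [div_lt_one (by linarith)]; linarith
      simp only [he]; linarith
  set C : ℝ := C₁.toReal with hC
  have hC0 : 0 ≤ C := ENNReal.toReal_nonneg
  -- the Hölder estimate
  have hW : ∀ n, ∀ s t : ℝ, 0 ≤ s → s ≤ t → t ≤ T →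
      ‖j₁ (j₀ (u n t)) - j₁ (j₀ (u n s))‖ ≤ C * (t - s) ^ e := by
    intro n s t hs hst htT
    rw [hderiv n s t hs hst htT, intervalIntegral.integral_of_le hst]
    set ν : Measure ℝ := volume.restrict (Set.Ioc s t) with hν
    have hle : ν ≤ volume.restrict (Set.Ioo 0 T) := by
      have h1 : volume.restrict (Set.Ioo 0 T) = volume.restrict (Set.Ioc 0 T) :=
        Measure.restrict_congr_set Ioo_ae_eq_Ioc
      rw [h1, hν]
      exact Measure.restrict_mono (Set.Ioc_subset_Ioc hs htT) le_rfl
    have hmeas : AEStronglyMeasurable (v n) ν := (hv n).1.mono_measure hle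
    have h1 : ‖∫ r in Set.Ioc s t, v n r‖ ≤ (eLpNorm (v n) 1 ν).toReal := by
      calc ‖∫ r in Set.Ioc s t, v n r‖ ≤ ∫ r in Set.Ioc s t, ‖v n r‖ :=
            norm_integral_le_integral_norm _
        _ = (eLpNorm (v n) 1 ν).toReal := by
            rw [integral_norm_eq_lintegral_enorm hmeas, eLpNorm_one_eq_lintegral_enorm]
    have h2 : eLpNorm (v n) 1 ν ≤ C₁ * ENNReal.ofReal (t - s) ^ e := by
      have h3 := eLpNorm_le_eLpNorm_mul_rpow_measure_univ hq.le hmeas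
      have h4 : ν Set.univ = ENNReal.ofReal (t - s) := by
        rw [hν, Measure.restrict_apply_univ, Real.volume_Ioc]
      have h5 : eLpNorm (v n) q ν ≤ C₁ := (eLpNorm_mono_measure _ hle).trans (hvbound n)
      calc eLpNorm (v n) 1 ν
          ≤ eLpNorm (v n) q ν * ν Set.univ ^ (1 / (1:ℝ≥0∞).toReal - 1 / q.toReal) := h3
        _ = eLpNorm (v n) q ν * ENNReal.ofReal (t - s) ^ e := by
            rw [h4]; norm_num [he, one_div]
        _ ≤ C₁ * ENNReal.ofReal (t - s) ^ e := mul_le_mul_left h5 _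
    have hfin : C₁ * ENNReal.ofReal (t - s) ^ e ≠ ⊤ :=
      ENNReal.mul_ne_top hC₁.ne (ENNReal.rpow_ne_top_of_nonneg he0.le ENNReal.ofReal_ne_top)
    have h6 : (eLpNorm (v n) 1 ν).toReal ≤ C * (t - s) ^ e := by
      have h7 := ENNReal.toReal_mono hfin h2
      rwa [ENNReal.toReal_mul, ← ENNReal.toReal_rpow,
        ENNReal.toReal_ofReal (by linarith)] at h7
    linarith
  -- symmetrized form
  have hWsym : ∀ n, ∀ s ∈ Set.Icc (0:ℝ) T, ∀ t ∈ Set.Icc (0:ℝ) T,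
      ‖j₁ (j₀ (u n s)) - j₁ (j₀ (u n t))‖ ≤ C * |s - t| ^ e := by
    intro n s hs t ht
    rcases le_total s t with h | h
    · rw [norm_sub_rev, abs_sub_comm, abs_of_nonneg (by linarith)]
      exact hW n s t hs.1 h ht.2
    · rw [abs_of_nonneg (by linarith)]
      exact hW n t s ht.1 h hs.2
  -- membership of the values in j₁ '' K
  have hWcont : ∀ n, ContinuousOn (fun s => j₁ (j₀ (u n s))) (Set.Icc 0 T) := by
    intro n t ht
    rw [Metric.continuousWithinAt_iff]
    intro ε hε
    obtain ⟨δ, hδpos, hδprop⟩ := aux_delta hC0 he0 hε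
    refine ⟨δ, hδpos, fun s hs hst => ?_⟩
    rw [dist_eq_norm]
    exact lt_of_le_of_lt (hWsym n s hs t ht)
      (hδprop _ (abs_nonneg _) (by rwa [Real.dist_eq] at hst))
  have hmem : ∀ n, ∀ t ∈ Set.Icc (0:ℝ) T, ∃ y ∈ K, j₁ y = j₁ (j₀ (u n t)) := by
    intro n t ht
    set A : Set ℝ := {s | s ∈ Set.Ioo 0 T ∧ ‖u n s‖ ≤ C₀} with hA
    have hnull : volume (Set.Ioo 0 T \ A) = 0 := by
      have h1 := hubound n
      rw [ae_iff, Measure.restrict_apply' measurableSet_Ioo] at h1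
      refine measure_mono_null ?_ h1
      rintro s ⟨hs1, hs2⟩
      exact ⟨fun h => hs2 ⟨hs1, h⟩, hs1⟩
    have hdense : t ∈ closure A := aux_dense hT hnull ht
    have hcw : ContinuousWithinAt (fun s => j₁ (j₀ (u n s))) A t :=
      (hWcont n t ht).mono (fun s hs => Set.mem_Icc_of_Ioo hs.1)
    have him : j₁ (j₀ (u n t)) ∈ closure ((fun s => j₁ (j₀ (u n s))) '' A) :=
      hcw.mem_closure_image hdense
    have hsub : (fun s => j₁ (j₀ (u n s))) '' A ⊆ j₁ '' K := by
      rintro _ ⟨s, hs, rfl⟩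
      exact ⟨j₀ (u n s), subset_closure ⟨u n s, mem_closedBall_zero_iff.2 hs.2, rfl⟩, rfl⟩
    have hclosed : IsClosed (j₁ '' K) := (hK.image j₁.continuous).isClosed
    have h2 : j₁ (j₀ (u n t)) ∈ closure (j₁ '' K) :=
      closure_mono hsub him
    rw [hclosed.closure_eq] at h2
    obtain ⟨y, hyK, hy⟩ := h2
    exact ⟨y, hyK, hy⟩
  choose! x hxK hxj using hmem
  -- x n t = j₀ (u n t) on Icc
  have hxeq : ∀ n, ∀ t ∈ Set.Icc (0:ℝ) T, x n t = j₀ (u n t) := by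
    intro n t ht
    exact hj₁inj (hxj n t ht)
  -- the pointwise-closed set of functions
  set Sg : Set ((Set.Icc (0:ℝ) T) → Y₁) :=
    {g | (∀ t, g t ∈ K) ∧ ∀ s t, ‖j₁ (g s) - j₁ (g t)‖ ≤ C * (dist s t) ^ e} with hSg
  have hSgequi : Equicontinuous (fun (p : Sg) => (p.1 : (Set.Icc (0:ℝ) T) → Y₁)) :=
    aux_equi j₁ j₁.continuous hj₁inj hK hC0 he0 _ (fun p t => p.2.1 t)
      (fun p s t => p.2.2 s t)
  have hSgcont : ∀ g ∈ Sg, Continuous g := fun g hg =>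
    hSgequi.continuous ⟨g, hg⟩
  have hSgcpt : IsCompact Sg := by
    have hsub : Sg ⊆ Set.pi Set.univ (fun _ : Set.Icc (0:ℝ) T => K) := by
      intro g hg t _
      exact hg.1 t
    refine (isCompact_univ_pi (fun _ => hK)).of_isClosed_subset ?_ hsub
    have h1 : IsClosed {g : (Set.Icc (0:ℝ) T) → Y₁ | ∀ t, g t ∈ K} := by
      have he1 : {g : (Set.Icc (0:ℝ) T) → Y₁ | ∀ t, g t ∈ K}
          = ⋂ t, (fun g : (Set.Icc (0:ℝ) T) → Y₁ => g t) ⁻¹' K := by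
        ext g; simp
      rw [he1]
      exact isClosed_iInter fun t => hK.isClosed.preimage (continuous_apply t)
    have h2 : IsClosed {g : (Set.Icc (0:ℝ) T) → Y₁ |
        ∀ s t, ‖j₁ (g s) - j₁ (g t)‖ ≤ C * (dist s t) ^ e} := by
      have he2 : {g : (Set.Icc (0:ℝ) T) → Y₁ |
          ∀ s t, ‖j₁ (g s) - j₁ (g t)‖ ≤ C * (dist s t) ^ e}
          = ⋂ s, ⋂ t, {g : (Set.Icc (0:ℝ) T) → Y₁ |
              ‖j₁ (g s) - j₁ (g t)‖ ≤ C * (dist s t) ^ e} := by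
        ext g; simp only [Set.mem_setOf_eq, Set.mem_iInter]
      rw [he2]
      refine isClosed_iInter fun s => isClosed_iInter fun t => ?_
      exact isClosed_le (((j₁.continuous.comp (continuous_apply s)).sub
        (j₁.continuous.comp (continuous_apply t))).norm) continuous_const
    exact h1.inter h2
  -- the set of continuous maps
  set S : Set C((Set.Icc (0:ℝ) T), Y₁) := {f | (f : (Set.Icc (0:ℝ) T) → Y₁) ∈ Sg} with hS
  have hS1 : ContinuousMap.toFun '' S = Sg := by
    apply Set.Subset.antisymm
    · rintro _ ⟨f, hf, rfl⟩
      exact hf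
    · intro g hg
      exact ⟨⟨g, hSgcont g hg⟩, hg, rfl⟩
  have hScpt : IsCompact S := by
    refine ArzelaAscoli.isCompact_of_equicontinuous S (by rw [hS1]; exact hSgcpt) ?_
    exact aux_equi j₁ j₁.continuous hj₁inj hK hC0 he0 _
      (fun p t => p.2.1 t) (fun p s t => p.2.2 s t)
  -- the continuous maps F n
  have hFmem : ∀ n, (fun t : Set.Icc (0:ℝ) T => x n t.1) ∈ Sg := by
    intro n
    constructor
    · intro t; exact hxK n t.1 t.2
    · intro s t
      have h1 := hWsym n s.1 s.2 t.1 t.2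
      rw [hxj n s.1 s.2, hxj n t.1 t.2]
      rwa [Subtype.dist_eq, Real.dist_eq]
  set F : ℕ → C((Set.Icc (0:ℝ) T), Y₁) :=
    fun n => ⟨fun t => x n t.1, hSgcont _ (hFmem n)⟩ with hF
  have hFS : ∀ n, F n ∈ S := fun n => hFmem n
  obtain ⟨g, hgS, φ, hφ, hconv⟩ := hScpt.tendsto_subseq hFS
  -- the functions
  refine ⟨fun n => Set.IccExtend hT0 (F n), ?_, ?_, φ, hφ,
    Set.IccExtend hT0 g, ?_, ?_⟩
  · intro n
    exact ((F n).continuous.Icc_extend').continuousOn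
  · intro n
    filter_upwards [self_mem_ae_restrict measurableSet_Ioo] with t ht
    have htIcc : t ∈ Set.Icc (0:ℝ) T := Set.mem_Icc_of_Ioo ht
    rw [Set.IccExtend_of_mem hT0 _ htIcc]
    exact hxeq n t htIcc
  · exact (g.continuous.Icc_extend').continuousOn
  · have hkey : ∀ k, (⨆ t : Set.Icc (0:ℝ) T,
        ‖Set.IccExtend hT0 (F (φ k)) t - Set.IccExtend hT0 g t‖) = ‖F (φ k) - g‖ := by
      intro k
      rw [ContinuousMap.norm_eq_iSup_norm]
      congr 1
      funext t
      rw [Set.IccExtend_val, Set.IccExtend_val, ContinuousMap.sub_apply]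
    simp only [hkey]
    have := hconv
    rw [tendsto_iff_norm_sub_tendsto_zero] at this
    exact this
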